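/- Let k : ℝ⁴ → ℝ be any smooth function and let {f,g} be the Lefschetz-singularity bracket {f,g} = k·((x₃²+x₄²)(∂₁f·∂₂g − ∂₂f·∂₁g) + (x₂x₃−x₁x₄)(∂₁f·∂₃g − ∂₃f·∂₁g) − (x₂x₄+x₁x₃)(∂₁f·∂₄g − ∂₄f·∂₁g) + (x₁x₃+x₂x₄)(∂₂f·∂₃g − ∂₃f·∂₂g) + (x₂x₃−x₁x₄)(∂₂f·∂₄g − ∂₄f·∂₂g) + (x₁²+x₂²)(∂₃f·∂₄g − ∂₄f·∂₃g)). Then the functions P¹ = x₁² − x₂² + x₃² − x₄² and P² = 2(x₁x₂ + x₃x₄) are Casimirs: {P¹, g} = 0 and {P², g} = 0 for every smooth g : ℝ⁴ → ℝ. -/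

import Mathlib

/-- Partial derivative of `f : ℝ⁴ → ℝ` in the `i`-th coordinate direction;
indices `0,1,2,3` correspond to the coordinates x₁,x₂,x₃,x₄. -/
noncomputable def pd (i : Fin 4) (f : (Fin 4 → ℝ) → ℝ) (x : Fin 4 → ℝ) : ℝ :=
  fderiv ℝ f x (Pi.single i 1)

/-- The Lefschetz-singularity bracket with conformal factor `k`. -/
noncomputable def lefBracket (k : (Fin 4 → ℝ) → ℝ)
    (f g : (Fin 4 → ℝ) → ℝ) : (Fin 4 → ℝ) → ℝ :=
  fun x =>
    k x * (((x 2) ^ 2 + (x 3) ^ 2) * (pd 0 f x * pd 1 g x - pd 1 f x * pd 0 g x)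
      + (x 1 * x 2 - x 0 * x 3) * (pd 0 f x * pd 2 g x - pd 2 f x * pd 0 g x)
      - (x 1 * x 3 + x 0 * x 2) * (pd 0 f x * pd 3 g x - pd 3 f x * pd 0 g x)
      + (x 0 * x 2 + x 1 * x 3) * (pd 1 f x * pd 2 g x - pd 2 f x * pd 1 g x)
      + (x 1 * x 2 - x 0 * x 3) * (pd 1 f x * pd 3 g x - pd 3 f x * pd 1 g x)
      + ((x 0) ^ 2 + (x 1) ^ 2) * (pd 2 f x * pd 3 g x - pd 3 f x * pd 2 g x))

/-! Up to the factor `k / 4`, the bracket `{f, g}` is the Jacobian determinant of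
`(f, g, P¹, P²)`, that is `{f, g} dx₁∧dx₂∧dx₃∧dx₄ = (k / 4) df∧dg∧dP¹∧dP²`.
For `f = P¹` or `f = P²` this determinant has two equal rows. -/

noncomputable def grad (f : (Fin 4 → ℝ) → ℝ) (x : Fin 4 → ℝ) : Fin 4 → ℝ :=
  fun i => pd i f x

def lefschetzRe : (Fin 4 → ℝ) → ℝ := fun y => y 0 ^ 2 - y 1 ^ 2 + y 2 ^ 2 - y 3 ^ 2

def lefschetzIm : (Fin 4 → ℝ) → ℝ := fun y => 2 * (y 0 * y 1 + y 2 * y 3)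

theorem grad_lefschetzRe (x : Fin 4 → ℝ) :
    grad lefschetzRe x = ![2 * x 0, -2 * x 1, 2 * x 2, -2 * x 3] := by
  ext i
  unfold lefschetzRe
  simp (disch := fun_prop) only [grad, pd, fderiv_fun_sub, fderiv_fun_add,
    fderiv_fun_pow, fderiv_apply]
  fin_cases i <;> simp

theorem grad_lefschetzIm (x : Fin 4 → ℝ) :
    grad lefschetzIm x = ![2 * x 1, 2 * x 0, 2 * x 3, 2 * x 2] := by
  ext i
  unfold lefschetzIm
  simp (disch := fun_prop) only [grad, pd, fderiv_const_mul, fderiv_fun_add,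
    fderiv_fun_mul, fderiv_apply]
  fin_cases i <;> simp

theorem lefBracket_eq_det (k f g : (Fin 4 → ℝ) → ℝ) (x : Fin 4 → ℝ) :
    lefBracket k f g x = k x / 4 *
      (Matrix.of ![grad f x, grad g x, grad lefschetzRe x, grad lefschetzIm x]).det := by
  rw [grad_lefschetzRe, grad_lefschetzIm, Matrix.det_succ_row_zero]
  simp only [lefBracket, grad, Fin.sum_univ_four, Matrix.det_fin_three, Matrix.submatrix_apply,
    Matrix.of_apply, Matrix.cons_val, Fin.succAbove, Fin.reduceSucc, Fin.reduceCastSucc,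
    Fin.reduceLT, ↓reduceIte, Fin.coe_ofNat_eq_mod]
  ring

theorem lefBracket_casimirs_general (k : (Fin 4 → ℝ) → ℝ)
    (g : (Fin 4 → ℝ) → ℝ) (x : Fin 4 → ℝ) :
    lefBracket k (fun y => (y 0) ^ 2 - (y 1) ^ 2 + (y 2) ^ 2 - (y 3) ^ 2) g x = 0
    ∧ lefBracket k (fun y => 2 * (y 0 * y 1 + y 2 * y 3)) g x = 0 := by
  constructor <;> rw [lefBracket_eq_det, mul_eq_zero] <;> right
  · exact Matrix.det_zero_of_row_eq (i := 0) (j := 2) (by decide) rfl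
  · exact Matrix.det_zero_of_row_eq (i := 0) (j := 3) (by decide) rfl

/-- `P¹ = x₁² − x₂² + x₃² − x₄²` and `P² = 2(x₁x₂ + x₃x₄)` are Casimir
functions of the Lefschetz-singularity bracket. -/
theorem lefBracket_casimirs (k : (Fin 4 → ℝ) → ℝ) (hk : ContDiff ℝ (⊤ : ℕ∞) k)
    (g : (Fin 4 → ℝ) → ℝ) (hg : ContDiff ℝ (⊤ : ℕ∞) g) (x : Fin 4 → ℝ) :
    lefBracket k (fun y => (y 0) ^ 2 - (y 1) ^ 2 + (y 2) ^ 2 - (y 3) ^ 2) g x = 0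
    ∧ lefBracket k (fun y => 2 * (y 0 * y 1 + y 2 * y 3)) g x = 0 :=
  lefBracket_casimirs_general k g x
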